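/- arXiv:2502.08738 — 2 statements merged into one kernel-verified Lean document; each statement's English description precedes it below -/
import Mathlib

section
/- For all i with 1 ≤ i ≤ n−1, the operator identity φ_i ∘ ξ_i = s_i ∘ φ_{i+1} holds on ℚ[x_1,…,x_n], where φ_j(f) = f|_{x_j = 0}, ξ_i is the isobaric divided difference in variables x_i, x_{i+1}, and s_i swaps the variables x_i and x_{i+1}. -/
/-!
Setting `x_i = 0` in the defining relation `(x_i - x_{i+1}) ξ_i f = x_i f - x_{i+1} s_i f` leaves
`-x_{i+1} φ_i(ξ_i f) = -x_{i+1} φ_i(s_i f)`, and `x_{i+1}` is a non-zero-divisor, so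
`φ_i ∘ ξ_i = φ_i ∘ s_i`. Finally `φ_i ∘ s_i = s_i ∘ φ_{i+1}`, since `s_i` maps `x_{i+1}` to `x_i`.
-/

open MvPolynomial

namespace MvPolynomial

theorem rename_aeval_ite_zero {R σ τ : Type*} [CommSemiring R] [DecidableEq σ] [DecidableEq τ]
    (e : σ ≃ τ) (k : σ) (f : MvPolynomial σ R) :
    rename e (aeval (fun l => if l = k then 0 else X l : σ → MvPolynomial σ R) f) =
      aeval (fun l => if l = e k then 0 else X l : τ → MvPolynomial τ R) (rename e f) := by
  rw [aeval_rename, ← AlgHom.comp_apply, comp_aeval]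
  congr 2 with l
  by_cases hl : l = k <;> simp [hl]

theorem aeval_ite_zero_eq_of_mul_sub_eq {R σ : Type*} [CommRing R] [DecidableEq σ] {i j : σ}
    (hij : i ≠ j) {f g h : MvPolynomial σ R} (hg : (X i - X j) * g = X i * f - X j * h) :
    aeval (fun l => if l = i then 0 else X l : σ → MvPolynomial σ R) g =
      aeval (fun l => if l = i then 0 else X l : σ → MvPolynomial σ R) h := by
  simpa [hij.symm] using
    congrArg (aeval (fun l => if l = i then 0 else X l : σ → MvPolynomial σ R)) hg

end MvPolynomial

/-- For `1 ≤ i ≤ n−1`, the operator identity `φ_i ∘ ξ_i = s_i ∘ φ_{i+1}`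
holds on `ℚ[x_1,…,x_n]`.  Here the variables are indexed by `Fin n`, `φ_j` sets the
variable `x_j` to `0`, `s_i` swaps the variables `x_i` and `x_{i+1}`, and `ξ_i` is the
isobaric divided difference, encoded by its defining relation
`(x_i − x_{i+1})·ξ_i(f) = x_i·f − x_{i+1}·s_i(f)`. -/
theorem phi_xi_eq_swap_phi (n : ℕ) (i j : Fin n) (hij : (j : ℕ) = (i : ℕ) + 1)
    (f g : MvPolynomial (Fin n) ℚ)
    (hg : (X i - X j) * g = X i * f - X j * rename (Equiv.swap i j) f) :
    aeval (fun k : Fin n => if k = i then 0 else X k : Fin n → MvPolynomial (Fin n) ℚ) g =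
      rename (Equiv.swap i j)
        (aeval (fun k : Fin n => if k = j then 0 else X k : Fin n → MvPolynomial (Fin n) ℚ) f) := by
  have hne : i ≠ j := fun h => by rw [h] at hij; omega
  rw [rename_aeval_ite_zero, Equiv.swap_apply_right]
  exact aeval_ite_zero_eq_of_mul_sub_eq hne hg
end

section
/- The Weyl symmetrizer satisfies the stability property W_{x_1,…,x_n}(f)|_{x_n=0} = W_{x_1,…,x_{n-1}}(f|_{x_n=0}) for all f ∈ R[x_1,…,x_n]. -/
open MvPolynomial

/-- The Vandermonde product `∏_{0 ≤ i < j < n} (x_i − x_j)` in the variables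
`x_0, x_1, …` (indexed by `ℕ`). -/
noncomputable def vand (R : Type*) [CommRing R] (n : ℕ) : MvPolynomial ℕ R :=
  ∏ i ∈ Finset.range n, ∏ j ∈ (Finset.range n).filter (fun j => i < j), (X i - X j)

/-- The alternating sum `∑_{σ∈S_n} (−1)^{ℓ(σ)} σ(x_0^{n-1} x_1^{n-2} ⋯ x_{n-2} · f)`,
where `σ ∈ S_n` acts by permuting the first `n` variables.  The Weyl symmetrizer
`W_{x_1,…,x_n}(f)` is the quotient of this by the Vandermonde product. -/
noncomputable def altSum (R : Type*) [CommRing R] (n : ℕ) (f : MvPolynomial ℕ R) :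
    MvPolynomial ℕ R :=
  ∑ σ : Equiv.Perm (Fin n), (Equiv.Perm.sign σ : ℤ) •
    rename (fun k : ℕ => if h : k < n then ((σ ⟨k, h⟩ : Fin n) : ℕ) else k)
      ((∏ i ∈ Finset.range n, X i ^ (n - 1 - i)) * f)


/-!
Substitute `x_n = 0` in `V_{n+1} · W = A_{n+1}(f)`, where `V` is the Vandermonde product and
`A` the alternating sum (variables `x_0, …, x_n`). Since `V_{n+1} = ∏_{i<n} (x_i - x_n) · V_n`,
the left side becomes `x_0 ⋯ x_{n-1} · V_n · W|_{x_n=0}`. In `A_{n+1}(f)`, a permutation with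
`σ(n) ≠ n` moves onto `x_n` a variable `x_{σ⁻¹(n)}` of positive exponent in the staircase
monomial `∏ x_i^{n-i}`, so its term dies; the surviving `σ` form `S_n`, and the staircase
specializes to `x_0 ⋯ x_{n-1}` times the staircase for `n`. Hence
`A_{n+1}(f)|_{x_n=0} = x_0 ⋯ x_{n-1} · A_n(f|_{x_n=0})`, and `x_0 ⋯ x_{n-1} · V_n` cancels
because every factor `x_i` and `x_i - x_j` is a non-zero-divisor in `R[x_0, x_1, …]`.
-/

open Finset

namespace MvPolynomial

variable {R σ : Type*} [CommRing R]

theorem isLeftRegular_X_sub_X {i j : σ} (hij : i ≠ j) :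
    IsLeftRegular (X i - X j : MvPolynomial σ R) := by
  classical
  -- `x_j ↦ x_i - x_j` is an involution sending `x_j` to `x_i - x_j`, and `x_j` is regular.
  set φ := aeval (R := R) (Function.update X j (X i - X j) : σ → MvPolynomial σ R)
  have hφX : φ (X j) = X i - X j := by simp [φ]
  have hφφ : ∀ p, φ (φ p) = p := by
    refine AlgHom.congr_fun (φ₁ := φ.comp φ) (φ₂ := AlgHom.id R _) (algHom_ext fun k => ?_)
    by_cases hk : k = j
    · subst hk; simp [φ, hij]
    · simp [φ, hk]
  intro a b h
  rw [← hφX] at h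
  have h' : X j * φ a = X j * φ b := by simpa only [map_mul, hφφ] using congrArg φ h
  exact Function.LeftInverse.injective hφφ (isRegular_X.left h')

end MvPolynomial

theorem isLeftRegular_vand (R : Type*) [CommRing R] (n : ℕ) : IsLeftRegular (vand R n) :=
  IsLeftRegular.prod fun _ _ => IsLeftRegular.prod fun _ hj =>
    isLeftRegular_X_sub_X (mem_filter.1 hj).2.ne

namespace Equiv.Perm

variable {n : ℕ}

def extendLast (τ : Perm (Fin n)) : Perm (Fin (n + 1)) :=
  finSuccEquivLast.symm.permCongr τ.optionCongr

@[simp] theorem extendLast_castSucc (τ : Perm (Fin n)) (i : Fin n) :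
    τ.extendLast i.castSucc = (τ i).castSucc := by
  simp [extendLast, finSuccEquivLast_castSucc, finSuccEquivLast_symm_some]

@[simp] theorem sign_extendLast (τ : Perm (Fin n)) : sign τ.extendLast = sign τ := by
  simp [extendLast, sign_permCongr]

theorem extendLast_injective :
    Function.Injective (extendLast : Perm (Fin n) → Perm (Fin (n + 1))) :=
  finSuccEquivLast.symm.permCongr.injective.comp optionCongr_injective

theorem mem_range_extendLast {σ : Perm (Fin (n + 1))} (hσ : σ (Fin.last n) = Fin.last n) :
    σ ∈ Set.range extendLast := by
  refine ⟨removeNone (finSuccEquivLast.permCongr σ), ?_⟩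
  have hnone : finSuccEquivLast.permCongr σ none = none := by simp [hσ, finSuccEquivLast_last]
  rw [extendLast, map_equiv_removeNone, hnone, swap_self, ← one_def, one_mul, ← permCongr_symm,
    symm_apply_apply]

def natExtend (σ : Perm (Fin n)) (k : ℕ) : ℕ :=
  if h : k < n then σ ⟨k, h⟩ else k

@[simp] theorem natExtend_val (σ : Perm (Fin n)) (i : Fin n) : σ.natExtend i = σ i := by
  simp [natExtend]

theorem natExtend_eq_self_iff (σ : Perm (Fin n)) {k : ℕ} : σ.natExtend k = n ↔ k = n := by
  unfold natExtend
  split_ifs with hk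
  · exact ⟨fun h => absurd h (σ ⟨k, hk⟩).isLt.ne, fun h => absurd h hk.ne⟩
  · rfl

theorem natExtend_extendLast (τ : Perm (Fin n)) : τ.extendLast.natExtend = τ.natExtend := by
  funext k
  rcases lt_trichotomy k n with hk | rfl | hk
  · calc τ.extendLast.natExtend k = τ.extendLast (Fin.castSucc ⟨k, hk⟩) :=
          natExtend_val _ (Fin.castSucc ⟨k, hk⟩)
      _ = τ.natExtend k := by rw [extendLast_castSucc, Fin.val_castSucc, natExtend_val τ ⟨k, hk⟩]
  · calc τ.extendLast.natExtend k = τ.extendLast (Fin.last k) := natExtend_val _ (Fin.last k)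
      _ = τ.natExtend k := by simp [extendLast, natExtend, finSuccEquivLast_last]
  · simp [natExtend, hk.not_gt, hk.not_ge]

end Equiv.Perm

section Specialization

variable (R : Type*) [CommRing R]

noncomputable def zeroVar (n : ℕ) (k : ℕ) : MvPolynomial ℕ R := if k = n then 0 else X k

noncomputable def staircase (n : ℕ) : MvPolynomial ℕ R := ∏ i ∈ range n, X i ^ (n - 1 - i)

variable {R}

theorem altSum_eq_sum (n : ℕ) (f : MvPolynomial ℕ R) :
    altSum R n f = ∑ σ : Equiv.Perm (Fin n),
      (Equiv.Perm.sign σ : ℤ) • rename σ.natExtend (staircase R n * f) := rfl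

@[simp] theorem aeval_zeroVar_X_self (n : ℕ) :
    aeval (zeroVar R n) (X n : MvPolynomial ℕ R) = 0 := by
  simp [zeroVar]

theorem aeval_zeroVar_X_of_ne {n k : ℕ} (h : k ≠ n) :
    aeval (zeroVar R n) (X k : MvPolynomial ℕ R) = X k := by
  simp [zeroVar, h]

theorem aeval_zeroVar_rename {n : ℕ} {a : ℕ → ℕ} (ha : ∀ k, a k = n ↔ k = n)
    (p : MvPolynomial ℕ R) :
    aeval (zeroVar R n) (rename a p) = rename a (aeval (zeroVar R n) p) := by
  refine AlgHom.congr_fun (φ₁ := (aeval (zeroVar R n)).comp (rename a))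
    (φ₂ := (rename a).comp (aeval (zeroVar R n))) (algHom_ext fun k => ?_) p
  by_cases hk : k = n <;> simp [zeroVar, hk, ha]

theorem rename_natExtend_prod_X {n : ℕ} (σ : Equiv.Perm (Fin n)) :
    rename σ.natExtend (∏ i ∈ range n, X i : MvPolynomial ℕ R) = ∏ i ∈ range n, X i := by
  simp only [map_prod, rename_X, ← Fin.prod_univ_eq_prod_range, Equiv.Perm.natExtend_val]
  exact Equiv.prod_comp σ fun i => X (i : ℕ)

theorem vand_succ (n : ℕ) : vand R (n + 1) = (∏ i ∈ range n, (X i - X n)) * vand R n := by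
  have hrow : ∀ i < n, (range (n + 1)).filter (fun j => i < j) =
      insert n ((range n).filter (fun j => i < j)) := fun i hi => by
    ext j; simp only [mem_filter, mem_range, mem_insert]; omega
  rw [vand, prod_range_succ, filter_false_of_mem (by simp), prod_empty, mul_one, vand,
    ← prod_mul_distrib]
  refine prod_congr rfl fun i hi => ?_
  rw [hrow i (mem_range.1 hi), prod_insert (by simp)]

theorem aeval_zeroVar_vand_succ (n : ℕ) :
    aeval (zeroVar R n) (vand R (n + 1)) = (∏ i ∈ range n, X i) * vand R n := by
  rw [vand_succ, map_mul, map_prod, vand, map_prod]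
  congr 1 <;> refine prod_congr rfl fun i hi => ?_
  · rw [map_sub, aeval_zeroVar_X_of_ne (mem_range.1 hi).ne, aeval_zeroVar_X_self, sub_zero]
  · rw [map_prod]
    refine prod_congr rfl fun j hj => ?_
    obtain ⟨hj, -⟩ := mem_filter.1 hj
    rw [map_sub, aeval_zeroVar_X_of_ne (mem_range.1 hi).ne,
      aeval_zeroVar_X_of_ne (mem_range.1 hj).ne]

theorem aeval_zeroVar_staircase_succ (n : ℕ) :
    aeval (zeroVar R n) (staircase R (n + 1)) = staircase R n * ∏ i ∈ range n, X i := by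
  rw [staircase, map_prod, prod_range_succ, Nat.add_sub_cancel, Nat.sub_self, pow_zero,
    map_one, mul_one, staircase, ← prod_mul_distrib]
  refine prod_congr rfl fun i hi => ?_
  have hi := mem_range.1 hi
  rw [map_pow, aeval_zeroVar_X_of_ne hi.ne, ← pow_succ]
  congr 1
  omega

theorem aeval_zeroVar_rename_staircase_succ {n : ℕ} {σ : Equiv.Perm (Fin (n + 1))}
    (hσ : σ (Fin.last n) ≠ Fin.last n) :
    aeval (zeroVar R n) (rename σ.natExtend (staircase R (n + 1))) = 0 := by
  -- `x_{i₀}` is sent to `x_n` and has positive exponent `n - i₀` in the staircase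
  set i₀ := σ.symm (Fin.last n)
  have hi₀ : (i₀ : ℕ) < n := Fin.val_lt_last fun h =>
    hσ ((congrArg σ h).symm.trans (σ.apply_symm_apply _))
  rw [staircase, map_prod, map_prod]
  refine prod_eq_zero (mem_range.2 i₀.isLt) ?_
  rw [map_pow, map_pow, rename_X, Equiv.Perm.natExtend_val, σ.apply_symm_apply, Fin.val_last,
    aeval_zeroVar_X_self, zero_pow (by omega)]

theorem aeval_zeroVar_altSum_succ (n : ℕ) (f : MvPolynomial ℕ R) :
    aeval (zeroVar R n) (altSum R (n + 1) f) =
      (∏ i ∈ range n, X i) * altSum R n (aeval (zeroVar R n) f) := by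
  rw [altSum_eq_sum, altSum_eq_sum, map_sum, mul_sum]
  refine (Fintype.sum_of_injective _ Equiv.Perm.extendLast_injective _ _ (fun σ hσ => ?_)
    fun τ => ?_).symm
  · have hσ : σ (Fin.last n) ≠ Fin.last n := mt Equiv.Perm.mem_range_extendLast hσ
    rw [map_zsmul, map_mul, map_mul, aeval_zeroVar_rename_staircase_succ hσ, zero_mul, smul_zero]
  · rw [Equiv.Perm.sign_extendLast, Equiv.Perm.natExtend_extendLast, map_zsmul,
      aeval_zeroVar_rename fun _ => τ.natExtend_eq_self_iff, mul_smul_comm, map_mul (aeval _),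
      aeval_zeroVar_staircase_succ]
    simp only [map_mul, rename_natExtend_prod_X]
    ring

end Specialization

/-- Variables are `0`-indexed, so `x_{n+1}` is `X n`; `g` and `g'` stand for
`W_{x_1,…,x_{n+1}}(f)` and `W_{x_1,…,x_n}(f|_{x_{n+1}=0})` through the defining relation
`(Vandermonde) · W(f) = (alternating sum)`. -/
theorem weyl_symmetrizer_stability_general
    (R : Type*) [CommRing R] (n : ℕ)
    (f g g' : MvPolynomial ℕ R)
    (hg : vand R (n + 1) * g = altSum R (n + 1) f)
    (hg' : vand R n * g' =
      altSum R n (aeval (fun k : ℕ => if k = n then 0 else X k : ℕ → MvPolynomial ℕ R) f)) :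
    aeval (fun k : ℕ => if k = n then 0 else X k : ℕ → MvPolynomial ℕ R) g = g' := by
  change vand R n * g' = altSum R n (aeval (zeroVar R n) f) at hg'
  have hspec := congrArg (aeval (zeroVar R n)) hg
  rw [map_mul, aeval_zeroVar_vand_succ, aeval_zeroVar_altSum_succ, ← hg', mul_assoc] at hspec
  exact isLeftRegular_vand R n ((isRegular_prod_X _).left hspec)

/-- The Weyl symmetrizer satisfies the stability property
`W_{x_1,…,x_{n+1}}(f)|_{x_{n+1}=0} = W_{x_1,…,x_n}(f|_{x_{n+1}=0})`, over a
commutative ring `R` of characteristic `0`.  Variables are `0`-indexed, so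
`x_{n+1}` is the variable `X n`; `g` encodes `W_{x_1,…,x_{n+1}}(f)` and `g'`
encodes `W_{x_1,…,x_n}(f|_{x_{n+1}=0})` via the defining relation
`(Vandermonde) · W(f) = (alternating sum)`. -/
theorem weyl_symmetrizer_stability
    (R : Type*) [CommRing R] [CharZero R] (n : ℕ)
    (f g g' : MvPolynomial ℕ R)
    (hg : vand R (n + 1) * g = altSum R (n + 1) f)
    (hg' : vand R n * g' =
      altSum R n (aeval (fun k : ℕ => if k = n then 0 else X k : ℕ → MvPolynomial ℕ R) f)) :
    aeval (fun k : ℕ => if k = n then 0 else X k : ℕ → MvPolynomial ℕ R) g = g' :=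
  weyl_symmetrizer_stability_general R n f g g' hg hg'
end
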